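/- Let M be a finite monadic algebra. Then M is isomorphic to a finite direct product of finite simple monadic algebras, where each finite simple closure algebra is isomorphic to some S_l (the Boolean algebra with l atoms in which 0 and 1 are the only closed elements). -/

import Mathlib

/-- A modal algebra: a Boolean algebra with a unary operation `◇` satisfying
`◇⊥ = ⊥` and `◇(a ⊔ b) = ◇a ⊔ ◇b`. -/
class ModalAlg (M : Type) extends BooleanAlgebra M where
  dia : M → M
  dia_bot : dia ⊥ = ⊥
  dia_sup : ∀ a b : M, dia (a ⊔ b) = dia a ⊔ dia b

/-- A closure algebra: a modal algebra satisfying `a ≤ ◇a = ◇◇a`. -/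
class ClosAlg (M : Type) extends ModalAlg M where
  le_dia : ∀ a : M, a ≤ dia a
  dia_dia : ∀ a : M, dia (dia a) = dia a

/-- The possibility operator `◇`. -/
def dia {M : Type} [ModalAlg M] : M → M := ModalAlg.dia

/-- The necessity operator `◻x = ¬◇¬x`. -/
def box {M : Type} [ModalAlg M] (a : M) : M := (dia aᶜ)ᶜ

/-- A homomorphism of closure algebras: it preserves the Boolean structure
(`⊔`, `ᶜ`, `⊥`, and hence `⊓`, `⊤`) and `◇`. -/
structure ClosHom (M N : Type) [ClosAlg M] [ClosAlg N] where
  toFun : M → N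
  map_sup : ∀ a b : M, toFun (a ⊔ b) = toFun a ⊔ toFun b
  map_compl : ∀ a : M, toFun aᶜ = (toFun a)ᶜ
  map_bot : toFun ⊥ = ⊥
  map_dia : ∀ a : M, toFun (dia a) = dia (toFun a)

/-- The two-element closure algebra `2`, with identity `◇`. -/
instance : ModalAlg Bool :=
  { (inferInstance : BooleanAlgebra Bool) with
    dia := id
    dia_bot := rfl
    dia_sup := fun _ _ => rfl }

instance : ClosAlg Bool :=
  { (inferInstance : ModalAlg Bool) with
    le_dia := fun _ => le_rfl
    dia_dia := fun _ => rfl }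

/-- Pointwise closure algebra structure on a product. -/
instance piClosAlg {I : Type} (A : I → Type) [∀ i, ClosAlg (A i)] : ClosAlg (∀ i, A i) :=
  { (inferInstance : BooleanAlgebra (∀ i, A i)) with
    dia := fun x i => dia (x i)
    dia_bot := funext fun _ => ModalAlg.dia_bot
    dia_sup := fun a b => funext fun i => ModalAlg.dia_sup (a i) (b i)
    le_dia := fun a i => ClosAlg.le_dia (a i)
    dia_dia := fun a => funext fun i => ClosAlg.dia_dia (a i) }

/-- The "simple" closure structure on a Boolean algebra: `◇x = ⊤` for `x ≠ ⊥`. -/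
def simpleClos (B : Type) [BooleanAlgebra B] [DecidableEq B] : ClosAlg B :=
  { (inferInstance : BooleanAlgebra B) with
    dia := fun x => if x = ⊥ then ⊥ else ⊤
    dia_bot := by simp
    dia_sup := by
      intro a b
      by_cases ha : a = ⊥ <;> by_cases hb : b = ⊥ <;>
        simp [ha, hb, sup_eq_bot_iff]
    le_dia := by intro a; by_cases h : a = ⊥ <;> simp [h]
    dia_dia := by
      intro a
      by_cases h : a = ⊥ <;> by_cases h2 : (⊤ : B) = ⊥ <;> simp [h, h2] }

/-- The simple monadic algebra `S_l`: the Boolean algebra with `l` atoms (realized as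
`Fin l → Bool`) in which `0` and `1` are the only closed elements, i.e. `◇a = ⊤` for
every `a ≠ ⊥`. -/
noncomputable instance Sl (l : ℕ) : ClosAlg (Fin l → Bool) := simpleClos _


/-!
The atoms of a finite monadic algebra fall into classes `p ~ q :↔ ◇p = ◇q`. Since `◇p` is
clopen, an atom `q ≰ ◇p` lies in the closed element `(◇p)ᶜ`, hence so does `◇q`; thus for atoms
`p ≤ ◇q` holds exactly when `p ~ q`. As `◇` commutes with finite joins, an atom lies below `◇a`
iff `a` contains an atom of its class. So under the identification of `M` with the powerset of
its atoms, `◇` acts on each class as the simple closure operator of `S_l`, `l` being the size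
of the class.
-/

theorem IsAtom.supPrime {α : Type*} [DistribLattice α] [OrderBot α] {a : α} (ha : IsAtom a) :
    SupPrime a :=
  ⟨fun h => ha.1 (isMin_iff_eq_bot.1 h), fun b c h => by
    by_contra! hbc
    exact ha.not_disjoint_iff_le.2 h
      (disjoint_sup_right.2 ⟨ha.not_le_iff_disjoint.1 hbc.1, ha.not_le_iff_disjoint.1 hbc.2⟩)⟩

theorem IsAtom.le_compl_iff {α : Type*} [BooleanAlgebra α] {a b : α} (ha : IsAtom a) :
    a ≤ bᶜ ↔ ¬a ≤ b :=
  le_compl_iff_disjoint_right.trans ha.not_le_iff_disjoint.symm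

open Classical in
theorem finset_sup_atoms_le_eq {α : Type*} [BooleanAlgebra α] [Fintype α] (a : α) :
    ({p | IsAtom p ∧ p ≤ a} : Finset α).sup id = a := by
  refine BooleanAlgebra.eq_iff_atom_le_iff.2 fun p hp => ?_
  rw [hp.supPrime.le_finset_sup]
  constructor
  · rintro ⟨q, hq, hpq⟩
    exact hpq.trans (Finset.mem_filter.1 hq).2.2
  · exact fun hpa => ⟨p, by simp [hp, hpa], le_rfl⟩

theorem exists_sigma_fin_equiv_fibers {α β : Type*} [Finite α] (f : α → β) :
    ∃ (n : ℕ) (l : Fin n → ℕ) (e : (Σ i : Fin n, Fin (l i)) ≃ α),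
      (∀ i, 0 < l i) ∧ ∀ x y, f (e x) = f (e y) ↔ x.1 = y.1 := by
  let g := Set.rangeFactorization f
  let c := (Finite.equivFin (Set.range f)).symm
  let e := (Equiv.sigmaCongr c fun i => (Finite.equivFin {x // g x = c i}).symm).trans
    (Equiv.sigmaFiberEquiv g)
  have hfe : ∀ z, f (e z) = c z.1 := fun z => congrArg Subtype.val ((Finite.equivFin _).symm z.2).2
  refine ⟨_, _, e, fun i => ?_, fun x y => ?_⟩
  · obtain ⟨x, hx⟩ := (c i).2
    have : Nonempty {x // g x = c i} := ⟨⟨x, Subtype.ext hx⟩⟩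
    exact Nat.card_pos
  · rw [hfe, hfe, ← Subtype.ext_iff, c.injective.eq_iff]

section ModalAlg

variable {M : Type} [ModalAlg M]

theorem dia_bot : dia (⊥ : M) = ⊥ := ModalAlg.dia_bot

theorem dia_sup (a b : M) : dia (a ⊔ b) = dia a ⊔ dia b := ModalAlg.dia_sup a b

theorem dia_mono : Monotone (dia : M → M) := fun a b h => by
  rw [← sup_eq_right.2 h, dia_sup]
  exact le_sup_left

theorem dia_finset_sup {ι : Type*} (s : Finset ι) (f : ι → M) :
    dia (s.sup f) = s.sup (dia ∘ f) :=
  map_finset_sup (⟨⟨dia, dia_sup⟩, dia_bot⟩ : SupBotHom M M) s f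

theorem IsAtom.le_dia_iff [Finite M] {p : M} (hp : IsAtom p) (a : M) :
    p ≤ dia a ↔ ∃ q, IsAtom q ∧ q ≤ a ∧ p ≤ dia q := by
  classical
  have := Fintype.ofFinite M
  refine ⟨fun h => ?_, fun ⟨q, _, hqa, hpq⟩ => hpq.trans (dia_mono hqa)⟩
  rw [← finset_sup_atoms_le_eq a, dia_finset_sup, hp.supPrime.le_finset_sup] at h
  obtain ⟨q, hq, hpq⟩ := h
  exact ⟨q, (Finset.mem_filter.1 hq).2.1, (Finset.mem_filter.1 hq).2.2, hpq⟩

end ModalAlg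

section Monadic

variable {M : Type} [ClosAlg M]

theorem le_dia (a : M) : a ≤ dia a := ClosAlg.le_dia a

theorem dia_dia (a : M) : dia (dia a) = dia a := ClosAlg.dia_dia a

theorem dia_compl_dia (hm : ∀ a : M, dia (box a) = box a) (a : M) :
    dia (dia a)ᶜ = (dia a)ᶜ := by
  simpa only [box, compl_compl, dia_dia] using hm (dia a)ᶜ

theorem IsAtom.le_dia_comm (hm : ∀ a : M, dia (box a) = box a) {p q : M} (hp : IsAtom p)
    (hq : IsAtom q) (h : p ≤ dia q) : q ≤ dia p := by
  by_contra hqp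
  have : dia q ≤ (dia p)ᶜ := dia_compl_dia hm p ▸ dia_mono (hq.le_compl_iff.2 hqp)
  exact hp.le_compl_iff.1 (h.trans this) (le_dia p)

theorem IsAtom.le_dia_iff_dia_eq (hm : ∀ a : M, dia (box a) = box a) {p q : M} (hp : IsAtom p)
    (hq : IsAtom q) : p ≤ dia q ↔ dia p = dia q :=
  ⟨fun h => le_antisymm (dia_dia q ▸ dia_mono h) (dia_dia p ▸ dia_mono (hp.le_dia_comm hm hq h)),
    fun h => h ▸ le_dia p⟩

end Monadic

section AtomIndicator

variable {M ι : Type} [BooleanAlgebra M] (e : ι ≃ {p : M // IsAtom p})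

open Classical in
noncomputable def atomIndicator (a : M) (x : ι) : Bool := decide ((e x : M) ≤ a)

theorem atomIndicator_sup (a b : M) :
    atomIndicator e (a ⊔ b) = atomIndicator e a ⊔ atomIndicator e b := by
  funext x
  rw [Bool.eq_iff_iff]
  simp [atomIndicator, (e x).2.supPrime.le_sup]

theorem atomIndicator_compl (a : M) : atomIndicator e aᶜ = (atomIndicator e a)ᶜ := by
  funext x
  rw [Bool.eq_iff_iff]
  simp [atomIndicator, (e x).2.le_compl_iff]

theorem atomIndicator_bot : atomIndicator e (⊥ : M) = ⊥ := by
  funext x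
  simp [atomIndicator, (e x).2.1]

theorem atomIndicator_bijective [Finite M] : Function.Bijective (atomIndicator e) := by
  classical
  have := Fintype.ofFinite M
  have := Fintype.ofEquiv _ e.symm
  refine ⟨fun a b hab => BooleanAlgebra.eq_iff_atom_le_iff.2 fun p hp => ?_, fun f => ?_⟩
  · simpa [atomIndicator, e.apply_symm_apply] using congrFun hab (e.symm ⟨p, hp⟩)
  · refine ⟨({y | f y} : Finset ι).sup fun y => (e y : M), funext fun x => ?_⟩
    have hle : ∀ y, (e x : M) ≤ e y ↔ x = y := fun y => by
      rw [(e y).2.le_iff_eq (e x).2.1, ← Subtype.ext_iff, e.injective.eq_iff]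
    simp [atomIndicator, (e x).2.supPrime.le_finset_sup, hle]

end AtomIndicator

theorem Sl_dia_apply {k : ℕ} (x : Fin k → Bool) (j : Fin k) : dia x j = decide (x ≠ ⊥) := by
  change (if x = ⊥ then ⊥ else ⊤ : Fin k → Bool) j = _
  split_ifs with hx <;> simp [hx]

section AtomPartition

variable {M : Type} [ClosAlg M] [Finite M] {n : ℕ} {l : Fin n → ℕ}
  (e : (Σ i : Fin n, Fin (l i)) ≃ {p : M // IsAtom p})

theorem le_dia_iff_exists_of_dia_eq_iff (hm : ∀ a : M, dia (box a) = box a)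
    (he : ∀ x y, dia (e x : M) = dia (e y : M) ↔ x.1 = y.1) (i : Fin n) (j : Fin (l i)) (a : M) :
    (e ⟨i, j⟩ : M) ≤ dia a ↔ ∃ j', (e ⟨i, j'⟩ : M) ≤ a := by
  rw [(e ⟨i, j⟩).2.le_dia_iff]
  constructor
  · rintro ⟨q, hq, hqa, hpq⟩
    obtain ⟨⟨i', j'⟩, hy⟩ := e.surjective ⟨q, hq⟩
    obtain rfl : (e ⟨i', j'⟩ : M) = q := congrArg Subtype.val hy
    obtain rfl : i = i' := (he _ _).1 (((e _).2.le_dia_iff_dia_eq hm hq).1 hpq)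
    exact ⟨j', hqa⟩
  · rintro ⟨j', hj'a⟩
    exact ⟨_, (e ⟨i, j'⟩).2, hj'a, ((e _).2.le_dia_iff_dia_eq hm (e _).2).2 ((he _ _).2 rfl)⟩

noncomputable def atomPartitionHom (hm : ∀ a : M, dia (box a) = box a)
    (he : ∀ x y, dia (e x : M) = dia (e y : M) ↔ x.1 = y.1) :
    ClosHom M (∀ i : Fin n, Fin (l i) → Bool) where
  toFun := Equiv.piCurry (fun _ _ => Bool) ∘ atomIndicator e
  map_sup a b := by rw [Function.comp_apply, atomIndicator_sup]; rfl
  map_compl a := by rw [Function.comp_apply, atomIndicator_compl]; rfl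
  map_bot := by rw [Function.comp_apply, atomIndicator_bot]; rfl
  map_dia a := by
    funext i j
    change atomIndicator e (dia a) ⟨i, j⟩ =
      dia (Equiv.piCurry (fun _ _ => Bool) (atomIndicator e a) i : Fin (l i) → Bool) j
    rw [Sl_dia_apply, Bool.eq_iff_iff, decide_eq_true_iff, Ne, funext_iff]
    simp [atomIndicator, Sigma.curry, le_dia_iff_exists_of_dia_eq_iff e hm he]

end AtomPartition

/-- every finite monadic algebra `M` (a closure algebra in which every
open element is closed, `◇◻a = ◻a`) is isomorphic to a finite direct product of the
finite simple monadic algebras `S_{l i}`. -/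
theorem stmt17 (M : Type) [ClosAlg M] (hfin : Finite M)
    (hmonadic : ∀ a : M, dia (box a) = box a) :
    ∃ (n : ℕ) (l : Fin n → ℕ), (∀ i, 0 < l i) ∧
      ∃ h : ClosHom M (∀ i : Fin n, Fin (l i) → Bool), Function.Bijective h.toFun := by
  obtain ⟨n, l, e, hl, he⟩ :=
    exists_sigma_fin_equiv_fibers fun p : {p : M // IsAtom p} => dia (p : M)
  exact ⟨n, l, hl, atomPartitionHom e hmonadic he,
    (Equiv.bijective _).comp (atomIndicator_bijective e)⟩
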